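/- arXiv:2002.12777 — 2 statements merged into one kernel-verified Lean document; each statement's English description precedes it below -/
import Mathlib

section
/- Given a triangle ABC and a cevian pair (B_A, C_A) from A with cevian intersection point N_A, the circumcircles of the four triangles A B B_A, A C C_A, C B_A N_A, B C_A N_A have a common point M_A (the Miquel–Steiner point of triangle ABC with cevians B B_A and C C_A). -/
open EuclideanGeometry

/-- `(B_A, C_A)` is a cevian pair from `A` in triangle `ABC`: `B_A` lies on line `AC`
with `B_A ∉ {A, C}`, `C_A` lies on line `AB` with `C_A ∉ {A, B}`, and the lines
`B B_A` and `C C_A` are not parallel. -/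
def IsCevianPair (A B C B_A C_A : EuclideanSpace ℝ (Fin 2)) : Prop :=
  B_A ∈ line[ℝ, A, C] ∧ B_A ≠ A ∧ B_A ≠ C ∧
  C_A ∈ line[ℝ, A, B] ∧ C_A ≠ A ∧ C_A ≠ B ∧
  ¬ AffineSubspace.Parallel (line[ℝ, B, B_A]) (line[ℝ, C, C_A])

/-- `M` is a Miquel–Steiner point of the cevian pair `(B_A, C_A)` from `A` with cevian
intersection point `N_A`: it lies on the circumcircles of the four triangles
`A B B_A`, `A C C_A`, `C B_A N_A`, `B C_A N_A`. -/
def IsMiquelPoint (A B C B_A C_A N_A M : EuclideanSpace ℝ (Fin 2)) : Prop :=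
  Cospherical ({A, B, B_A, M} : Set (EuclideanSpace ℝ (Fin 2))) ∧
  Cospherical ({A, C, C_A, M} : Set (EuclideanSpace ℝ (Fin 2))) ∧
  Cospherical ({C, B_A, N_A, M} : Set (EuclideanSpace ℝ (Fin 2))) ∧
  Cospherical ({B, C_A, N_A, M} : Set (EuclideanSpace ℝ (Fin 2)))

/-!
The lines `AB`, `AC`, `BB_A`, `CC_A` form a complete quadrilateral and the four circles are the
circumcircles of its four triangles. Let `M` be the second common point of the circles `ABB_A` and
`ACC_A`, the reflection of `A` in their line of centres. It differs from `A`: otherwise the circles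
touch at `A`, and comparing the angles that the chords `AB` and `AC_A` (on one line) make with the
common tangent shows that triangle `B_A C N_A` has equal angles mod `π` at `B_A` and at `C`, so it
is degenerate. The other two circles pass through `M` by Miquel's theorem (an oriented-angle
chase mod `π`) for the triangles `C_A B N_A` and `B_A C N_A`.
-/

open Module Real

namespace EuclideanGeometry

variable {V P : Type*} [NormedAddCommGroup V] [InnerProductSpace ℝ V] [MetricSpace P]
  [NormedAddTorsor V P]

theorem not_collinear_of_mem_affineSpan_pair {a b c d : P} (h : ¬Collinear ℝ ({a, b, c} : Set P))
    (hd : d ∈ line[ℝ, a, c]) (hda : d ≠ a) : ¬Collinear ℝ ({a, b, d} : Set P) := by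
  intro habd
  have hcad : Collinear ℝ ({c, a, d} : Set P) :=
    (collinear_insert_of_mem_affineSpan_pair hd).subset (by simp [Set.insert_subset_iff])
  have hc : Collinear ℝ (insert c ({a, b, d} : Set P)) :=
    (habd.collinear_insert_iff_of_ne (by simp) (by simp) hda.symm).2 hcad
  exact h (hc.subset (by simp [Set.insert_subset_iff]))

theorem exists_mem_sphere_of_not_collinear {a b c : P} (h : ¬Collinear ℝ ({a, b, c} : Set P)) :
    ∃ s : Sphere P, a ∈ s ∧ b ∈ s ∧ c ∈ s :=
  let t : Affine.Triangle ℝ P := ⟨![a, b, c], affineIndependent_iff_not_collinear_set.2 h⟩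
  ⟨t.circumsphere, t.mem_circumsphere 0, t.mem_circumsphere 1, t.mem_circumsphere 2⟩

theorem ne_of_mem_affineSpan_pair {a b c d : P} (h : ¬Collinear ℝ ({a, b, c} : Set P))
    (hd : d ∈ line[ℝ, a, c]) : d ≠ b := by
  rintro rfl
  exact h ((collinear_insert_of_mem_affineSpan_pair hd).subset (by simp [Set.insert_subset_iff]))

theorem Sphere.eq_of_collinear_of_mem {s : Sphere P} {p₁ p₂ p₃ : P} (hp₁ : p₁ ∈ s)
    (hp₂ : p₂ ∈ s) (hp₃ : p₃ ∈ s) (h : Collinear ℝ ({p₁, p₂, p₃} : Set P)) (h₁₂ : p₁ ≠ p₂)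
    (h₁₃ : p₁ ≠ p₃) : p₂ = p₃ := by
  by_contra h₂₃
  have hs : Cospherical ({p₁, p₂, p₃} : Set P) :=
    cospherical_iff_exists_sphere.2 ⟨s, by simp [Set.insert_subset_iff, hp₁, hp₂, hp₃]⟩
  exact affineIndependent_iff_not_collinear_set.1 (hs.affineIndependent_of_ne h₁₂ h₁₃ h₂₃) h

theorem Sphere.center_ne_of_mem {s : Sphere P} {p q : P} (hp : p ∈ s) (hq : q ∈ s) (hpq : p ≠ q) :
    s.center ≠ p := by
  rintro rfl
  rw [mem_sphere, dist_self] at hp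
  rw [mem_sphere, ← hp, dist_eq_zero] at hq
  exact hpq hq.symm

theorem Sphere.reflection_mem {s : Sphere P} {ℓ : AffineSubspace ℝ P} [Nonempty ℓ]
    [ℓ.direction.HasOrthogonalProjection] (hc : s.center ∈ ℓ) {p : P} (hp : p ∈ s) :
    reflection ℓ p ∈ s := by
  rwa [mem_sphere, dist_comm, dist_reflection_eq_of_mem ℓ hc, dist_comm]

theorem Sphere.exists_mem_mem_ne {s₁ s₂ : Sphere P} {p : P} (hp₁ : p ∈ s₁) (hp₂ : p ∈ s₂)
    (hp : p ∉ line[ℝ, s₁.center, s₂.center]) : ∃ q, q ∈ s₁ ∧ q ∈ s₂ ∧ q ≠ p := by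
  have : Nonempty line[ℝ, s₁.center, s₂.center] := ⟨⟨_, left_mem_affineSpan_pair ℝ _ _⟩⟩
  exact ⟨reflection line[ℝ, s₁.center, s₂.center] p,
    Sphere.reflection_mem (left_mem_affineSpan_pair ℝ _ _) hp₁,
    Sphere.reflection_mem (right_mem_affineSpan_pair ℝ _ _) hp₂,
    fun h => hp ((reflection_eq_self_iff p).1 h)⟩

variable [Fact (finrank ℝ V = 2)] [Module.Oriented ℝ V (Fin 2)]

theorem two_zsmul_oangle_ne_of_affineIndependent {a b c : P}
    (h : AffineIndependent ℝ ![a, b, c]) : (2 : ℤ) • ∡ a b c ≠ (2 : ℤ) • ∡ b a c := by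
  have hab : a ≠ b := h.injective.ne (by decide : (0 : Fin 3) ≠ 1)
  have hac : a ≠ c := h.injective.ne (by decide : (0 : Fin 3) ≠ 2)
  have hbc : b ≠ c := h.injective.ne (by decide : (1 : Fin 3) ≠ 2)
  intro heq
  have hsum := oangle_add_oangle_add_oangle_eq_pi hab.symm hbc.symm hac
  have hbca : (2 : ℤ) • ∡ b c a = 0 := by
    rw [oangle_rev c a b, smul_neg, eq_neg_iff_add_eq_zero] at heq
    calc (2 : ℤ) • ∡ b c a
        = (2 : ℤ) • (∡ a b c + ∡ b c a + ∡ c a b) - ((2 : ℤ) • ∡ a b c + (2 : ℤ) • ∡ c a b) := by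
          abel
      _ = 0 := by rw [hsum, heq, Real.Angle.two_zsmul_coe_pi, sub_zero]
  refine affineIndependent_iff_not_collinear_set.1 h ?_
  have hcol := oangle_eq_zero_or_eq_pi_iff_collinear.1 (Real.Angle.two_zsmul_eq_zero_iff.1 hbca)
  exact hcol.subset (by simp [Set.insert_subset_iff])

/-- With `p` on the line of centres the circles touch at `p`, and both inscribed angles are
the angle between the chord through `p` and the common tangent. -/
theorem Sphere.two_zsmul_oangle_eq_of_mem_affineSpan_centers {s₁ s₂ : Sphere P}
    {p a₁ b₁ a₂ b₂ : P} (hp : p ∈ line[ℝ, s₁.center, s₂.center]) (hp₁ : p ∈ s₁) (ha₁ : a₁ ∈ s₁)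
    (hb₁ : b₁ ∈ s₁) (hp₂ : p ∈ s₂) (ha₂ : a₂ ∈ s₂) (hb₂ : b₂ ∈ s₂)
    (ha : a₂ ∈ line[ℝ, p, a₁]) (ha₁p : a₁ ≠ p) (hb₁p : b₁ ≠ p) (hb₁a₁ : b₁ ≠ a₁)
    (ha₂p : a₂ ≠ p) (hb₂p : b₂ ≠ p) (hb₂a₂ : b₂ ≠ a₂) :
    (2 : ℤ) • ∡ p b₁ a₁ = (2 : ℤ) • ∡ p b₂ a₂ := by
  have hc : Collinear ℝ ({s₁.center, p, s₂.center} : Set P) :=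
    (collinear_insert_of_mem_affineSpan_pair hp).subset (by simp [Set.insert_subset_iff])
  have ha' : Collinear ℝ ({a₁, p, a₂} : Set P) :=
    (collinear_insert_of_mem_affineSpan_pair ha).subset (by simp [Set.insert_subset_iff])
  calc (2 : ℤ) • ∡ p b₁ a₁ = π - (2 : ℤ) • ∡ a₁ p s₁.center :=
        eq_sub_of_add_eq' (Sphere.two_zsmul_oangle_center_add_two_zsmul_oangle_eq_pi
          hp₁ hb₁ ha₁ hb₁p hb₁a₁ ha₁p.symm)
    _ = π - (2 : ℤ) • ∡ a₂ p s₂.center := by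
      rw [ha'.two_zsmul_oangle_eq_left ha₁p ha₂p, hc.two_zsmul_oangle_eq_right
        (Sphere.center_ne_of_mem hp₁ ha₁ ha₁p.symm) (Sphere.center_ne_of_mem hp₂ ha₂ ha₂p.symm)]
    _ = (2 : ℤ) • ∡ p b₂ a₂ :=
        (eq_sub_of_add_eq' (Sphere.two_zsmul_oangle_center_add_two_zsmul_oangle_eq_pi
          hp₂ hb₂ ha₂ hb₂p hb₂a₂ ha₂p.symm)).symm

/-- **Miquel's theorem** for the triangle `pqr` with `z`, `x`, `y` on the lines `pq`, `qr`, `rp`: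
a second common point `m` of the circles `pzy` and `qzx` lies on the circle `rxy`. -/
theorem cospherical_miquel {s₁ s₂ : Sphere P} {p q r x y z m : P}
    (hqpr : AffineIndependent ℝ ![q, p, r]) (hz : Collinear ℝ ({p, z, q} : Set P))
    (hx : Collinear ℝ ({r, q, x} : Set P)) (hy : Collinear ℝ ({r, y, p} : Set P))
    (hzp : z ≠ p) (hzq : z ≠ q) (hxq : x ≠ q) (hxr : x ≠ r) (hyr : y ≠ r) (hyp : y ≠ p)
    (hp₁ : p ∈ s₁) (hz₁ : z ∈ s₁) (hy₁ : y ∈ s₁) (hm₁ : m ∈ s₁)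
    (hq₂ : q ∈ s₂) (hz₂ : z ∈ s₂) (hx₂ : x ∈ s₂) (hm₂ : m ∈ s₂)
    (hmx : m ≠ x) (hmy : m ≠ y) (hmz : m ≠ z) :
    Cospherical ({y, x, r, m} : Set P) := by
  have hqp : q ≠ p := hqpr.injective.ne (by decide : (0 : Fin 3) ≠ 1)
  have hqr : q ≠ r := hqpr.injective.ne (by decide : (0 : Fin 3) ≠ 2)
  have hpr : p ≠ r := hqpr.injective.ne (by decide : (1 : Fin 3) ≠ 2)
  have hr : (2 : ℤ) • ∡ y r x = (2 : ℤ) • ∡ p r q := by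
    rw [(hy.subset (by simp [Set.insert_subset_iff]) : Collinear ℝ ({y, r, p} : Set P))
        |>.two_zsmul_oangle_eq_left hyr hpr,
      (hx.subset (by simp [Set.insert_subset_iff]) : Collinear ℝ ({x, r, q} : Set P))
        |>.two_zsmul_oangle_eq_right hxr hqr]
  have hm : (2 : ℤ) • ∡ y m x = (2 : ℤ) • ∡ p r q := by
    calc (2 : ℤ) • ∡ y m x = (2 : ℤ) • ∡ y m z + (2 : ℤ) • ∡ z m x := by
          rw [← smul_add, oangle_add hmy.symm hmz.symm hmx.symm]
      _ = (2 : ℤ) • ∡ y p z + (2 : ℤ) • ∡ z q x := by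
          rw [Sphere.two_zsmul_oangle_eq hy₁ hm₁ hp₁ hz₁ hmy hmz hyp.symm hzp.symm,
            Sphere.two_zsmul_oangle_eq hz₂ hm₂ hq₂ hx₂ hmz hmx hzq.symm hxq.symm]
      _ = (2 : ℤ) • ∡ r p q + (2 : ℤ) • ∡ p q r := by
          rw [(hy.subset (by simp [Set.insert_subset_iff]) : Collinear ℝ ({y, p, r} : Set P))
              |>.two_zsmul_oangle_eq_left hyp hpr.symm,
            (hz.subset (by simp [Set.insert_subset_iff]) : Collinear ℝ ({z, p, q} : Set P))
              |>.two_zsmul_oangle_eq_right hzp hqp,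
            (hz.subset (by simp [Set.insert_subset_iff]) : Collinear ℝ ({z, q, p} : Set P))
              |>.two_zsmul_oangle_eq_left hzq hqp.symm,
            (hx.subset (by simp [Set.insert_subset_iff]) : Collinear ℝ ({x, q, r} : Set P))
              |>.two_zsmul_oangle_eq_right hxq hqr.symm]
      _ = (2 : ℤ) • (∡ r p q + ∡ p q r + ∡ q r p) - (2 : ℤ) • ∡ q r p := by abel
      _ = (2 : ℤ) • ∡ p r q := by
          rw [oangle_add_oangle_add_oangle_eq_pi hpr hqp hqr.symm, Real.Angle.two_zsmul_coe_pi,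
            zero_sub, oangle_rev p r q, smul_neg, neg_neg]
  have hyrx : ¬Collinear ℝ ({y, r, x} : Set P) := by
    rw [collinear_iff_of_two_zsmul_oangle_eq hr]
    exact fun h => affineIndependent_iff_not_collinear_set.1 hqpr
      (h.subset (by simp [Set.insert_subset_iff]))
  have := cospherical_of_two_zsmul_oangle_eq_of_not_collinear (hr.trans hm.symm) hyrx
  exact this.subset (by simp [Set.insert_subset_iff])

end EuclideanGeometry

section Cevians

variable {V P : Type*} [NormedAddCommGroup V] [InnerProductSpace ℝ V] [MetricSpace P]
  [NormedAddTorsor V P] [Fact (finrank ℝ V = 2)] [Module.Oriented ℝ V (Fin 2)]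
  {A B C B_A C_A N_A M : P} {ω₁ ω₂ : Sphere P}

theorem notMem_affineSpan_centers_of_cevians (hABC : ¬Collinear ℝ ({A, B, C} : Set P))
    (hB_A : B_A ∈ line[ℝ, A, C]) (hC_A : C_A ∈ line[ℝ, A, B]) (hB_AA : B_A ≠ A) (hC_AA : C_A ≠ A)
    (hN₁ : N_A ∈ line[ℝ, B, B_A]) (hN₂ : N_A ∈ line[ℝ, C, C_A])
    (hCBN : AffineIndependent ℝ ![C, B_A, N_A])
    (hA₁ : A ∈ ω₁) (hB₁ : B ∈ ω₁) (hB_A₁ : B_A ∈ ω₁)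
    (hA₂ : A ∈ ω₂) (hC₂ : C ∈ ω₂) (hC_A₂ : C_A ∈ ω₂) :
    A ∉ line[ℝ, ω₁.center, ω₂.center] := by
  intro hA
  have hAB : A ≠ B := fun h => hABC (by simp [h, collinear_pair])
  have hAC : A ≠ C := fun h => hABC (by simp [h, collinear_pair])
  have hB_AB : B_A ≠ B := ne_of_mem_affineSpan_pair hABC hB_A
  have hC_AC : C_A ≠ C :=
    ne_of_mem_affineSpan_pair (fun h => hABC (h.subset (by simp [Set.insert_subset_iff]))) hC_A
  have hCB_A : C ≠ B_A := hCBN.injective.ne (by decide : (0 : Fin 3) ≠ 1)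
  have hCN : C ≠ N_A := hCBN.injective.ne (by decide : (0 : Fin 3) ≠ 2)
  have hB_AN : B_A ≠ N_A := hCBN.injective.ne (by decide : (1 : Fin 3) ≠ 2)
  have hAB_A : Collinear ℝ ({A, B_A, C} : Set P) :=
    (collinear_insert_of_mem_affineSpan_pair hB_A).subset (by simp [Set.insert_subset_iff])
  have hBB_AN : Collinear ℝ ({B, B_A, N_A} : Set P) :=
    (collinear_insert_of_mem_affineSpan_pair hN₁).subset (by simp [Set.insert_subset_iff])
  have htangent : (2 : ℤ) • ∡ A B_A B = (2 : ℤ) • ∡ A C C_A :=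
    Sphere.two_zsmul_oangle_eq_of_mem_affineSpan_centers hA hA₁ hB₁ hB_A₁ hA₂ hC_A₂ hC₂
      hC_A hAB.symm hB_AA hB_AB hC_AA hAC.symm hC_AC.symm
  refine two_zsmul_oangle_ne_of_affineIndependent hCBN ?_
  rw [(hAB_A.subset (by simp [Set.insert_subset_iff]) : Collinear ℝ ({C, B_A, A} : Set P))
      |>.two_zsmul_oangle_eq_left hCB_A hB_AA.symm,
    (hBB_AN.subset (by simp [Set.insert_subset_iff]) : Collinear ℝ ({N_A, B_A, B} : Set P))
      |>.two_zsmul_oangle_eq_right hB_AN.symm hB_AB.symm, htangent,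
    (hAB_A.subset (by simp [Set.insert_subset_iff]) : Collinear ℝ ({B_A, C, A} : Set P))
      |>.two_zsmul_oangle_eq_left hCB_A.symm hAC,
    (collinear_insert_of_mem_affineSpan_pair hN₂).two_zsmul_oangle_eq_right hCN.symm hC_AC]

theorem cospherical_of_cevians (hABC : ¬Collinear ℝ ({A, B, C} : Set P))
    (hB_A : B_A ∈ line[ℝ, A, C]) (hC_A : C_A ∈ line[ℝ, A, B]) (hB_AA : B_A ≠ A) (hB_AC : B_A ≠ C)
    (hC_AA : C_A ≠ A) (hN₁ : N_A ∈ line[ℝ, B, B_A])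
    (hN₂ : N_A ∈ line[ℝ, C, C_A]) (hCBN : AffineIndependent ℝ ![C, B_A, N_A])
    (hBCN : AffineIndependent ℝ ![B, C_A, N_A])
    (hA₁ : A ∈ ω₁) (hB₁ : B ∈ ω₁) (hB_A₁ : B_A ∈ ω₁) (hM₁ : M ∈ ω₁)
    (hA₂ : A ∈ ω₂) (hC₂ : C ∈ ω₂) (hC_A₂ : C_A ∈ ω₂) (hM₂ : M ∈ ω₂) (hMA : M ≠ A) :
    Cospherical ({C, B_A, N_A, M} : Set P) := by
  have hAB : A ≠ B := fun h => hABC (by simp [h, collinear_pair])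
  have hAC : A ≠ C := fun h => hABC (by simp [h, collinear_pair])
  have hB_AB : B_A ≠ B := ne_of_mem_affineSpan_pair hABC hB_A
  have hC_AC : C_A ≠ C :=
    ne_of_mem_affineSpan_pair (fun h => hABC (h.subset (by simp [Set.insert_subset_iff]))) hC_A
  have hCN : C ≠ N_A := hCBN.injective.ne (by decide : (0 : Fin 3) ≠ 2)
  have hB_AN : B_A ≠ N_A := hCBN.injective.ne (by decide : (1 : Fin 3) ≠ 2)
  have hMB_A : M ≠ B_A := fun h => hB_AC.symm <| Sphere.eq_of_collinear_of_mem hA₂ hC₂ (h ▸ hM₂)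
    ((collinear_insert_of_mem_affineSpan_pair hB_A).subset (by simp [Set.insert_subset_iff]))
    hAC hB_AA.symm
  have hMC : M ≠ C := fun h => hB_AC <| Sphere.eq_of_collinear_of_mem hA₁ hB_A₁ (h ▸ hM₁)
    ((collinear_insert_of_mem_affineSpan_pair hB_A).subset (by simp [Set.insert_subset_iff]))
    hB_AA.symm hAC
  exact cospherical_miquel hBCN (collinear_insert_of_mem_affineSpan_pair hC_A)
    (collinear_insert_of_mem_affineSpan_pair hN₁) (collinear_insert_of_mem_affineSpan_pair hN₂)
    hC_AA.symm hAB hB_AB hB_AN hCN hC_AC.symm hC_A₂ hA₂ hC₂ hM₂ hB₁ hA₁ hB_A₁ hM₁ hMB_A hMC hMA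

end Cevians

/-- **Miquel–Steiner point for a triangle with two cevians.** The circumcircles of the
four triangles `A B B_A`, `A C C_A`, `C B_A N_A`, `B C_A N_A` have a common point. -/
theorem miquel_point_exists
    (A B C B_A C_A N_A : EuclideanSpace ℝ (Fin 2))
    (hABC : AffineIndependent ℝ ![A, B, C])
    (hcev : IsCevianPair A B C B_A C_A)
    (hN₁ : N_A ∈ line[ℝ, B, B_A]) (hN₂ : N_A ∈ line[ℝ, C, C_A])
    (hCBN : AffineIndependent ℝ ![C, B_A, N_A])
    (hBCN : AffineIndependent ℝ ![B, C_A, N_A]) :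
    ∃ M_A : EuclideanSpace ℝ (Fin 2), IsMiquelPoint A B C B_A C_A N_A M_A := by
  have : Fact (finrank ℝ (EuclideanSpace ℝ (Fin 2)) = 2) := ⟨finrank_euclideanSpace_fin⟩
  let : Module.Oriented ℝ (EuclideanSpace ℝ (Fin 2)) (Fin 2) :=
    ⟨(EuclideanSpace.basisFun (Fin 2) ℝ).toBasis.orientation⟩
  obtain ⟨hB_A, hB_AA, hB_AC, hC_A, hC_AA, hC_AB, -⟩ := hcev
  have hABC' := affineIndependent_iff_not_collinear_set.1 hABC
  have hACB : ¬Collinear ℝ ({A, C, B} : Set (EuclideanSpace ℝ (Fin 2))) :=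
    fun h => hABC' (h.subset (by simp [Set.insert_subset_iff]))
  obtain ⟨ω₁, hA₁, hB₁, hB_A₁⟩ :=
    exists_mem_sphere_of_not_collinear (not_collinear_of_mem_affineSpan_pair hABC' hB_A hB_AA)
  obtain ⟨ω₂, hA₂, hC₂, hC_A₂⟩ :=
    exists_mem_sphere_of_not_collinear (not_collinear_of_mem_affineSpan_pair hACB hC_A hC_AA)
  obtain ⟨M, hM₁, hM₂, hMA⟩ := Sphere.exists_mem_mem_ne hA₁ hA₂
    (notMem_affineSpan_centers_of_cevians hABC' hB_A hC_A hB_AA hC_AA hN₁ hN₂ hCBN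
      hA₁ hB₁ hB_A₁ hA₂ hC₂ hC_A₂)
  refine ⟨M, cospherical_iff_exists_sphere.2 ⟨ω₁, ?_⟩, cospherical_iff_exists_sphere.2 ⟨ω₂, ?_⟩,
    cospherical_of_cevians hABC' hB_A hC_A hB_AA hB_AC hC_AA hN₁ hN₂ hCBN hBCN
      hA₁ hB₁ hB_A₁ hM₁ hA₂ hC₂ hC_A₂ hM₂ hMA,
    cospherical_of_cevians hACB hC_A hB_A hC_AA hC_AB hB_AA hN₂ hN₁ hBCN hCBN
      hA₂ hC₂ hC_A₂ hM₂ hA₁ hB₁ hB_A₁ hM₁ hMA⟩ <;>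
  simp only [Set.insert_subset_iff, Set.singleton_subset_iff, Sphere.mem_coe]
  exacts [⟨hA₁, hB₁, hB_A₁, hM₁⟩, ⟨hA₂, hC₂, hC_A₂, hM₂⟩]
end

section
/- Let ABC be a triangle such that B and C are not antipodal on the circumcircle, and let M_t be the intersection point of the tangent lines to the circumcircle at B and at C. Let (B_A, C_A) be a cevian pair from A with cevian intersection point N_A and Miquel–Steiner point M_A. Then the line B_A C_A is parallel to the line BC if and only if M_A lies on the line through A and M_t (the symmedian of ABC from A). -/
open EuclideanGeometry

/-- The circle `s` is tangent to the affine subspace `L` at `P`: `P` lies on both,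
and `s` meets `L` only at `P`. -/
def IsTangentAt (s : Sphere (EuclideanSpace ℝ (Fin 2)))
    (L : AffineSubspace ℝ (EuclideanSpace ℝ (Fin 2))) (P : EuclideanSpace ℝ (Fin 2)) : Prop :=
  P ∈ s ∧ P ∈ L ∧ ∀ x, x ∈ s → x ∈ L → x = P

/-!
With `A` as origin write `B_A - A = t (C - A)` and `C_A - A = s (B - A)`, so that
`B_A C_A ∥ BC` iff `s = t`. The pole `M_t` of `BC` satisfies
`2 ⟪AB, AC⟫ AM_t = AC² AB + AB² AC`: both sides have the same inner products with the radii
`OB` and `OC`, which span the plane. The Miquel point is the second intersection of the circles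
`A B B_A` and `A C C_A`, so `AM_A` is perpendicular to the vector `g` joining their centres, and
the chords along `AB` and `AC` give `2 ⟪g, AB⟫ = (s - 1) AB²` and `2 ⟪g, AC⟫ = (1 - t) AC²`.
Hence `4 ⟪AB, AC⟫ ⟪g, AM_t⟫ = AB² AC² (s - t)`, and in the plane `M_A ∈ AM_t` iff `AM_t ⊥ g`.
-/

open Module
open scoped RealInnerProductSpace Affine

variable {V P : Type*} [NormedAddCommGroup V] [InnerProductSpace ℝ V] [MetricSpace P]
  [NormedAddTorsor V P]

theorem AffineIndependent.linearIndependent_vsub_vsub {A B C : P}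
    (h : AffineIndependent ℝ ![A, B, C]) : LinearIndependent ℝ ![B -ᵥ A, C -ᵥ A] := by
  rw [affineIndependent_iff_linearIndependent_vsub ℝ _ 0] at h
  have hcomp : ![B -ᵥ A, C -ᵥ A] =
      (fun i : {x : Fin 3 // x ≠ 0} ↦ ![A, B, C] i -ᵥ ![A, B, C] 0) ∘
        ![⟨1, by decide⟩, ⟨2, by decide⟩] := by
    ext i; fin_cases i <;> rfl
  rw [hcomp]
  exact h.comp _ (by decide)

theorem exists_vsub_eq_smul_of_mem_affineSpan_pair {A B X : P} (h : X ∈ line[ℝ, A, B]) :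
    ∃ t : ℝ, X -ᵥ A = t • (B -ᵥ A) := by
  rw [← vsub_vadd X A, vadd_left_mem_affineSpan_pair] at h
  exact h.imp fun _ ht ↦ ht.symm

theorem not_cospherical_of_mem_affineSpan_pair {p₁ p₂ p₃ : P} (hp : p₁ ∈ line[ℝ, p₂, p₃])
    (h₁₂ : p₁ ≠ p₂) (h₁₃ : p₁ ≠ p₃) (h₂₃ : p₂ ≠ p₃) : ¬Cospherical {p₁, p₂, p₃} := fun h ↦
  affineIndependent_iff_not_collinear_set.mp (h.affineIndependent_of_ne h₁₂ h₁₃ h₂₃)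
    (collinear_insert_of_mem_affineSpan_pair hp)

theorem two_inner_vsub_eq_of_dist_eq_of_vsub_eq_smul {A X E : P} {v : V} {t : ℝ}
    (h : dist A E = dist X E) (hX : X -ᵥ A = t • v) (ht : t ≠ 0) :
    2 * ⟪E -ᵥ A, v⟫ = t * ‖v‖ ^ 2 := by
  have := AffineSubspace.mem_perpBisector_iff_inner_eq.mp
    (AffineSubspace.mem_perpBisector_iff_dist_eq'.mpr h)
  rw [hX, dist_comm, dist_eq_norm_vsub V, hX, inner_smul_right, norm_smul, mul_pow,
    Real.norm_eq_abs, sq_abs] at this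
  apply mul_left_cancel₀ ht
  linear_combination 2 * this

theorem two_inner_vsub_eq_of_dist_eq {A X E : P} (h : dist A E = dist X E) :
    2 * ⟪E -ᵥ A, X -ᵥ A⟫ = ‖X -ᵥ A‖ ^ 2 := by
  simpa using two_inner_vsub_eq_of_dist_eq_of_vsub_eq_smul h (one_smul ℝ _).symm one_ne_zero

theorem affineSpan_pair_parallel_iff_of_vsub_eq_smul {A B C B' C' : P} {s t : ℝ}
    (hind : LinearIndependent ℝ ![B -ᵥ A, C -ᵥ A]) (hB' : B' -ᵥ A = t • (C -ᵥ A))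
    (hC' : C' -ᵥ A = s • (B -ᵥ A)) (ht : t ≠ 0) :
    line[ℝ, B', C'] ∥ line[ℝ, B, C] ↔ s = t := by
  have hB'C' : B' -ᵥ C' = t • (C -ᵥ A) - s • (B -ᵥ A) := by
    rw [← hB', ← hC', vsub_sub_vsub_cancel_right]
  rw [AffineSubspace.affineSpan_pair_parallel_iff_vectorSpan_eq, vectorSpan_pair, vectorSpan_pair,
    hB'C', ← vsub_sub_vsub_cancel_right B C A]
  constructor
  · intro h
    obtain ⟨k, hk⟩ := Submodule.mem_span_singleton.mp (h ▸ Submodule.mem_span_singleton_self _)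
    obtain ⟨hks, hkt⟩ := LinearIndependent.pair_iff.mp hind (k + s) (-k - t)
      (by linear_combination (norm := module) hk)
    linarith
  · rintro rfl
    rw [← smul_sub, ← neg_sub, smul_neg, ← neg_smul,
      Submodule.span_singleton_smul_eq (isUnit_iff_ne_zero.mpr (neg_ne_zero.mpr ht))]

-- `u + v` and `u - v` are orthogonal, hence span the plane.
theorem eq_zero_of_inner_eq_zero_of_norm_eq [Fact (finrank ℝ V = 2)] {u v z : V}
    (huv : ‖u‖ = ‖v‖) (hsub : u - v ≠ 0) (hadd : u + v ≠ 0) (hu : ⟪u, z⟫ = 0)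
    (hv : ⟪v, z⟫ = 0) : z = 0 := by
  obtain ⟨k, rfl⟩ := Submodule.mem_span_singleton.mp <|
    Submodule.mem_span_singleton_of_inner_eq_zero_of_inner_eq_zero (𝕜 := ℝ) (u := z) hsub hadd
      (by rw [inner_sub_left, hu, hv, sub_zero])
      (by rw [real_inner_comm]; exact (real_inner_add_sub_eq_zero_iff u v).mpr huv)
  have : k * ‖u + v‖ ^ 2 = 0 := by
    rw [← real_inner_self_eq_norm_sq, ← real_inner_smul_right, inner_add_left, hu, hv, add_zero]
  simp [hadd] at this
  simp [this]

theorem mem_affineSpan_pair_iff_inner_eq_zero [Fact (finrank ℝ V = 2)] {A M T : P} {g : V}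
    (hg : g ≠ 0) (hM : M ≠ A) (hT : T ≠ A) (hMg : ⟪g, M -ᵥ A⟫ = 0) :
    M ∈ line[ℝ, A, T] ↔ ⟪g, T -ᵥ A⟫ = 0 := by
  rw [← vsub_vadd M A, vadd_left_mem_affineSpan_pair]
  constructor
  · rintro ⟨r, hr⟩
    have hr0 : r ≠ 0 := by rintro rfl; exact hM (vsub_eq_zero_iff_eq.mp (by simpa using hr.symm))
    rw [← hr, inner_smul_right] at hMg
    exact (mul_eq_zero.mp hMg).resolve_left hr0
  · intro hTg
    exact Submodule.mem_span_singleton.mp <|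
      Submodule.mem_span_singleton_of_inner_eq_zero_of_inner_eq_zero hg (vsub_ne_zero.mpr hT)
        hMg hTg

theorem IsTangentAt.inner_vsub_vsub_eq_zero {S : Sphere (EuclideanSpace ℝ (Fin 2))}
    {L : AffineSubspace ℝ (EuclideanSpace ℝ (Fin 2))} {B T : EuclideanSpace ℝ (Fin 2)}
    (h : IsTangentAt S L B) (hT : T ∈ L) : ⟪T -ᵥ B, B -ᵥ S.center⟫ = 0 :=
  Sphere.secondInter_eq_self_iff.mp <|
    h.2.2 _ ((Sphere.secondInter_mem _).mpr h.1) (L.smul_vsub_vadd_mem _ hT h.2.1 h.2.1)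

-- The direction `AC² • AB + AB² • AC` of the line `A T` is that of the `A`-symmedian.
theorem two_inner_smul_vsub_eq_of_tangents [Fact (finrank ℝ V = 2)] {S : Sphere P}
    {A B C T : P} (hA : A ∈ S) (hB : B ∈ S) (hC : C ∈ S) (hBC : B ≠ C)
    (hmid : midpoint ℝ B C ≠ S.center) (hTB : ⟪T -ᵥ B, B -ᵥ S.center⟫ = 0)
    (hTC : ⟪T -ᵥ C, C -ᵥ S.center⟫ = 0) :
    (2 * ⟪B -ᵥ A, C -ᵥ A⟫) • (T -ᵥ A) =
      ‖C -ᵥ A‖ ^ 2 • (B -ᵥ A) + ‖B -ᵥ A‖ ^ 2 • (C -ᵥ A) := by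
  have hOB := two_inner_vsub_eq_of_dist_eq (hA.trans hB.symm)
  have hOC := two_inner_vsub_eq_of_dist_eq (hA.trans hC.symm)
  rw [← sub_eq_zero]
  refine eq_zero_of_inner_eq_zero_of_norm_eq (u := B -ᵥ S.center) (v := C -ᵥ S.center)
    (by rw [← dist_eq_norm_vsub, ← dist_eq_norm_vsub, hB, hC]) ?_ ?_ ?_ ?_
  · rwa [vsub_sub_vsub_cancel_right, vsub_ne_zero]
  · intro h
    apply hmid
    rw [← vsub_eq_zero_iff_eq, ← neg_vsub_eq_vsub_rev, vsub_midpoint, ← smul_add,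
      ← neg_vsub_eq_vsub_rev B, ← neg_vsub_eq_vsub_rev C, ← neg_add, h]
    simp
  all_goals
    rw [← vsub_sub_vsub_cancel_right T B A, ← vsub_sub_vsub_cancel_right B S.center A] at hTB
    rw [← vsub_sub_vsub_cancel_right T C A, ← vsub_sub_vsub_cancel_right C S.center A] at hTC
    rw [← vsub_sub_vsub_cancel_right _ S.center A]
    generalize B -ᵥ A = b at *
    generalize C -ᵥ A = c at *
    generalize T -ᵥ A = m at *
    generalize S.center -ᵥ A = o at *
    simp only [inner_sub_left, inner_sub_right, inner_add_right, inner_smul_right,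
      real_inner_self_eq_norm_sq] at hOB hOC hTB hTC ⊢
    simp only [real_inner_comm b m, real_inner_comm c m, real_inner_comm o m, real_inner_comm o b,
      real_inner_comm o c, real_inner_comm b c] at hTB hTC ⊢
  · linear_combination (2 * ⟪b, c⟫) * hTB + (‖c‖ ^ 2 / 2 - ⟪b, c⟫) * hOB + ‖b‖ ^ 2 / 2 * hOC
  · linear_combination (2 * ⟪b, c⟫) * hTC + (‖b‖ ^ 2 / 2 - ⟪b, c⟫) * hOC + ‖c‖ ^ 2 / 2 * hOB

-- `g` is the vector joining the centres of the two circles.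
theorem exists_inner_eq_of_cospherical_of_vsub_eq_smul {A B C B' C' M : P} {s t : ℝ}
    (hB' : B' -ᵥ A = t • (C -ᵥ A)) (hC' : C' -ᵥ A = s • (B -ᵥ A)) (ht : t ≠ 0) (hs : s ≠ 0)
    (h₁ : Cospherical {A, B, B', M}) (h₂ : Cospherical {A, C, C', M}) :
    ∃ g : V, ⟪g, M -ᵥ A⟫ = 0 ∧ 2 * ⟪g, B -ᵥ A⟫ = (s - 1) * ‖B -ᵥ A‖ ^ 2 ∧
      2 * ⟪g, C -ᵥ A⟫ = (1 - t) * ‖C -ᵥ A‖ ^ 2 := by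
  obtain ⟨E, r, hE⟩ := h₁
  obtain ⟨F, r', hF⟩ := h₂
  have hEA : dist A E = r := hE A (by simp)
  have hFA : dist A F = r' := hF A (by simp)
  refine ⟨F -ᵥ E, inner_vsub_vsub_of_dist_eq_of_dist_eq (hEA.trans (hE M (by simp)).symm)
    (hFA.trans (hF M (by simp)).symm), ?_, ?_⟩
  · rw [← vsub_sub_vsub_cancel_right F E A, inner_sub_left, mul_sub,
      two_inner_vsub_eq_of_dist_eq_of_vsub_eq_smul (hFA.trans (hF C' (by simp)).symm) hC' hs,
      two_inner_vsub_eq_of_dist_eq (hEA.trans (hE B (by simp)).symm)]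
    ring
  · rw [← vsub_sub_vsub_cancel_right F E A, inner_sub_left, mul_sub,
      two_inner_vsub_eq_of_dist_eq_of_vsub_eq_smul (hEA.trans (hE B' (by simp)).symm) hB' ht,
      two_inner_vsub_eq_of_dist_eq (hFA.trans (hF C (by simp)).symm)]
    ring

theorem inner_ne_zero_and_ne_zero_of_two_inner_smul_eq {b c m : V}
    (hind : LinearIndependent ℝ ![b, c])
    (hm : (2 * ⟪b, c⟫) • m = ‖c‖ ^ 2 • b + ‖b‖ ^ 2 • c) : ⟪b, c⟫ ≠ 0 ∧ m ≠ 0 := by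
  have hc : c ≠ 0 := by simpa using hind.ne_zero 1
  have hne : ‖c‖ ^ 2 • b + ‖b‖ ^ 2 • c ≠ 0 := fun h ↦
    hc (by simpa using (LinearIndependent.pair_iff.mp hind _ _ h).1)
  constructor <;> rintro h <;> simp [h] at hm <;> exact hne hm.symm

theorem inner_eq_zero_iff_of_two_inner_smul_eq {b c m g : V} {s t : ℝ}
    (hind : LinearIndependent ℝ ![b, c])
    (hm : (2 * ⟪b, c⟫) • m = ‖c‖ ^ 2 • b + ‖b‖ ^ 2 • c)
    (hb : 2 * ⟪g, b⟫ = (s - 1) * ‖b‖ ^ 2) (hc : 2 * ⟪g, c⟫ = (1 - t) * ‖c‖ ^ 2) :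
    ⟪g, m⟫ = 0 ↔ s = t := by
  have hgm : 4 * ⟪b, c⟫ * ⟪g, m⟫ = ‖b‖ ^ 2 * ‖c‖ ^ 2 * (s - t) := by
    have := congrArg (⟪g, ·⟫) hm
    simp only [inner_smul_right, inner_add_right] at this
    linear_combination 2 * this + ‖c‖ ^ 2 * hb + ‖b‖ ^ 2 * hc
  have hbc := (inner_ne_zero_and_ne_zero_of_two_inner_smul_eq hind hm).1
  have hb0 : b ≠ 0 := by simpa using hind.ne_zero 0
  have hc0 : c ≠ 0 := by simpa using hind.ne_zero 1
  constructor
  · intro h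
    rw [h, mul_zero] at hgm
    simpa [sub_eq_zero, hb0, hc0] using hgm.symm
  · rintro rfl
    simpa [hbc] using hgm

theorem parallel_iff_miquel_point_mem_symmedian_general
    (A B C B_A C_A N_A M_A M_t : EuclideanSpace ℝ (Fin 2))
    (hABC : AffineIndependent ℝ ![A, B, C])
    (S : Sphere (EuclideanSpace ℝ (Fin 2)))
    (hS : A ∈ S ∧ B ∈ S ∧ C ∈ S)
    (hant : midpoint ℝ B C ≠ S.center)
    (lB lC : AffineSubspace ℝ (EuclideanSpace ℝ (Fin 2)))
    (hlB : (∃ p q : EuclideanSpace ℝ (Fin 2), p ≠ q ∧ lB = line[ℝ, p, q]) ∧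
      IsTangentAt S lB B)
    (hlC : (∃ p q : EuclideanSpace ℝ (Fin 2), p ≠ q ∧ lC = line[ℝ, p, q]) ∧
      IsTangentAt S lC C)
    (hMt : M_t ∈ lB ∧ M_t ∈ lC)
    (hcev : IsCevianPair A B C B_A C_A)
    (hM : IsMiquelPoint A B C B_A C_A N_A M_A) :
    AffineSubspace.Parallel (line[ℝ, B_A, C_A]) (line[ℝ, B, C]) ↔
      M_A ∈ line[ℝ, A, M_t] := by
  have : Fact (finrank ℝ (EuclideanSpace ℝ (Fin 2)) = 2) := ⟨finrank_euclideanSpace_fin⟩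
  obtain ⟨hBA, hBA_A, hBA_C, hCA, hCA_A, -, -⟩ := hcev
  obtain ⟨t, ht⟩ := exists_vsub_eq_smul_of_mem_affineSpan_pair hBA
  obtain ⟨s, hs⟩ := exists_vsub_eq_smul_of_mem_affineSpan_pair hCA
  have ht0 : t ≠ 0 := by rintro rfl; exact hBA_A (by simpa [sub_eq_zero] using ht)
  have ht1 : t ≠ 1 := by rintro rfl; exact hBA_C (by simpa [sub_eq_zero] using ht)
  have hs0 : s ≠ 0 := by rintro rfl; exact hCA_A (by simpa [sub_eq_zero] using hs)
  have hAC : A ≠ C := hABC.injective.ne (by decide : (0 : Fin 3) ≠ 2)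
  have hBC : B ≠ C := hABC.injective.ne (by decide : (1 : Fin 3) ≠ 2)
  have hind := hABC.linearIndependent_vsub_vsub
  have hsym := two_inner_smul_vsub_eq_of_tangents hS.1 hS.2.1 hS.2.2 hBC hant
    (hlB.2.inner_vsub_vsub_eq_zero hMt.1) (hlC.2.inner_vsub_vsub_eq_zero hMt.2)
  obtain ⟨g, hMg, hBg, hCg⟩ :=
    exists_inner_eq_of_cospherical_of_vsub_eq_smul ht hs ht0 hs0 hM.1 hM.2.1
  have hg : g ≠ 0 := by
    rintro rfl
    simp [sub_eq_zero, Ne.symm ht1, hAC.symm] at hCg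
  have hMA : M_A ≠ A := by
    rintro rfl
    exact not_cospherical_of_mem_affineSpan_pair hBA hBA_A hBA_C hAC <| hM.2.2.1.subset <| by
      intro x; simp only [Set.mem_insert_iff, Set.mem_singleton_iff]; tauto
  rw [affineSpan_pair_parallel_iff_of_vsub_eq_smul hind ht hs ht0,
    mem_affineSpan_pair_iff_inner_eq_zero hg hMA
      (vsub_ne_zero.mp (inner_ne_zero_and_ne_zero_of_two_inner_smul_eq hind hsym).2) hMg,
    inner_eq_zero_iff_of_two_inner_smul_eq hind hsym hBg hCg]

/-- `B_A C_A ∥ BC` if and only if the Miquel–Steiner point `M_A` lies on the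
symmedian of `ABC` from `A`, i.e. the line through `A` and the intersection
point `M_t` of the tangents to the circumcircle at `B` and `C`. -/
theorem parallel_iff_miquel_point_mem_symmedian
    (A B C B_A C_A N_A M_A M_t : EuclideanSpace ℝ (Fin 2))
    (hABC : AffineIndependent ℝ ![A, B, C])
    (S : Sphere (EuclideanSpace ℝ (Fin 2)))
    (hS : A ∈ S ∧ B ∈ S ∧ C ∈ S)
    (hant : midpoint ℝ B C ≠ S.center)
    (lB lC : AffineSubspace ℝ (EuclideanSpace ℝ (Fin 2)))
    (hlB : (∃ p q : EuclideanSpace ℝ (Fin 2), p ≠ q ∧ lB = line[ℝ, p, q]) ∧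
      IsTangentAt S lB B)
    (hlC : (∃ p q : EuclideanSpace ℝ (Fin 2), p ≠ q ∧ lC = line[ℝ, p, q]) ∧
      IsTangentAt S lC C)
    (hMt : M_t ∈ lB ∧ M_t ∈ lC)
    (hcev : IsCevianPair A B C B_A C_A)
    (hN₁ : N_A ∈ line[ℝ, B, B_A]) (hN₂ : N_A ∈ line[ℝ, C, C_A])
    (hCBN : AffineIndependent ℝ ![C, B_A, N_A])
    (hBCN : AffineIndependent ℝ ![B, C_A, N_A])
    (hM : IsMiquelPoint A B C B_A C_A N_A M_A) :
    AffineSubspace.Parallel (line[ℝ, B_A, C_A]) (line[ℝ, B, C]) ↔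
      M_A ∈ line[ℝ, A, M_t] :=
  parallel_iff_miquel_point_mem_symmedian_general A B C B_A C_A N_A M_A M_t hABC S hS hant lB lC hlB
    hlC hMt hcev hM
end
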